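/- arXiv:2004.03530 — 3 statements merged into one kernel-verified Lean document; each statement's English description precedes it below -/
import Mathlib

section
/- For ν > 0, β > 0, α > 0, λ ∈ ℝ, and z > 0, the fractional integration formula (1/Γ(ν)) ∫₀^z (z−s)^{ν−1} s^{β−1} E_{α,β}(λ s^α) ds = z^{β+ν−1} E_{α,β+ν}(λ z^α) holds. -/
/-!
Expand `E_{α,β}(λ s^α)` into its power series and integrate term by term. Each term is a Beta
integral, `∫₀^z (z - s)^{ν-1} s^{αk+β-1} ds = Γ(ν) Γ(αk+β) / Γ(αk+β+ν) · z^{αk+β+ν-1}`, so the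
coefficient `1 / Γ(αk+β)` cancels and what is left is `Γ(ν)` times the `k`-th term of
`z^{β+ν-1} E_{α,β+ν}(λ z^α)`. Integrating term by term is legitimate because the same computation
at `|λ|` gives a convergent series: the terms of `E_{α,c}(x)` are eventually dominated by a
geometric series, through the bound `Γ(t) ≥ M^{t-1} e^{-M}` (for `t ≥ 1`) with `M^α = 2|x| + 1`.
-/

noncomputable def mlE (α β x : ℝ) : ℝ :=
  ∑' k : ℕ, x ^ k / Real.Gamma (α * k + β)

open Real MeasureTheory Set Filter

theorem rpow_sub_one_mul_exp_neg_le_Gamma {t M : ℝ} (ht : 1 ≤ t) (hM : 0 < M) :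
    M ^ (t - 1) * exp (-M) ≤ Gamma t := by
  have hint := GammaIntegral_convergent (by linarith : 0 < t)
  calc M ^ (t - 1) * exp (-M) = ∫ x in Ioi M, exp (-x) * M ^ (t - 1) := by
        rw [integral_mul_const, integral_exp_neg_Ioi, mul_comm]
    _ ≤ ∫ x in Ioi M, exp (-x) * x ^ (t - 1) := by
        refine setIntegral_mono_on ((integrableOn_exp_neg_Ioi M).mul_const _)
          (hint.mono_set (Ioi_subset_Ioi hM.le)) measurableSet_Ioi fun x hx =>
          mul_le_mul_of_nonneg_left (rpow_le_rpow hM.le (le_of_lt hx) (by linarith)) (exp_pos _).le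
    _ ≤ ∫ x in Ioi 0, exp (-x) * x ^ (t - 1) :=
        setIntegral_mono_set hint
          (ae_restrict_of_forall_mem measurableSet_Ioi fun x hx =>
            mul_nonneg (exp_pos _).le (rpow_nonneg (le_of_lt hx) _))
          (Ioi_subset_Ioi hM.le).eventuallyLE
    _ = Gamma t := (Gamma_eq_integral (by linarith)).symm

theorem summable_pow_div_Gamma {α : ℝ} (hα : 0 < α) (c x : ℝ) :
    Summable fun k : ℕ => x ^ k / Gamma (α * k + c) := by
  set M := (2 * |x| + 1) ^ α⁻¹
  have hM : 0 < M := by positivity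
  have hMα : M ^ α = 2 * |x| + 1 := by
    rw [← rpow_mul (by positivity), inv_mul_cancel₀ hα.ne', rpow_one]
  have hratio : |x| / M ^ α < 1 := by
    rw [hMα, div_lt_one (by positivity)]; linarith [abs_nonneg x]
  refine ((summable_geometric_of_lt_one (by positivity) hratio).mul_left
    (exp M * M ^ (1 - c))).of_norm_bounded_eventually_nat ?_
  have hlarge : ∀ᶠ k : ℕ in atTop, 1 ≤ α * k + c :=
    (tendsto_natCast_atTop_atTop.const_mul_atTop hα).atTop_add tendsto_const_nhds
      |>.eventually_ge_atTop 1
  filter_upwards [hlarge] with k hk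
  have hΓ := rpow_sub_one_mul_exp_neg_le_Gamma hk hM
  have hpow : M ^ (α * k + c - 1) = (M ^ α) ^ k * M ^ (c - 1) := by
    rw [← rpow_natCast, ← rpow_mul hM.le, ← rpow_add hM, mul_comm α, add_sub_assoc]
  rw [norm_div, norm_pow, Real.norm_eq_abs, Real.norm_of_nonneg (hΓ.trans' (by positivity)),
    div_le_iff₀ (hΓ.trans_lt' (by positivity)), div_pow]
  calc |x| ^ k = exp M * M ^ (1 - c) * (|x| ^ k / (M ^ α) ^ k)
        * (M ^ (α * k + c - 1) * exp (-M)) := by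
        rw [hpow, rpow_sub hM, rpow_sub hM, rpow_one, exp_neg]
        field_simp
    _ ≤ _ := by gcongr

theorem intervalIntegrable_rpow_mul_rpow_sub_half {a z : ℝ} (ha : 0 < a) (hz : 0 < z) (b : ℝ) :
    IntervalIntegrable (fun s => s ^ (a - 1) * (z - s) ^ (b - 1)) volume 0 (z / 2) := by
  refine (intervalIntegral.intervalIntegrable_rpow' (by linarith)).mul_continuousOn ?_
  refine continuousOn_of_forall_continuousAt fun s hs => ?_
  rw [uIcc_of_le (by linarith)] at hs
  exact ContinuousAt.rpow_const (f := fun s => z - s) (by fun_prop)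
    (Or.inl (sub_pos.2 (by linarith [hs.2])).ne')

theorem intervalIntegrable_rpow_mul_rpow_sub {a b z : ℝ} (ha : 0 < a) (hb : 0 < b) (hz : 0 < z) :
    IntervalIntegrable (fun s => s ^ (a - 1) * (z - s) ^ (b - 1)) volume 0 z := by
  refine (intervalIntegrable_rpow_mul_rpow_sub_half ha hz b).trans ?_
  have h := (intervalIntegrable_rpow_mul_rpow_sub_half hb hz a).comp_sub_left z
  simp only [sub_sub_cancel, sub_zero, show z - z / 2 = z / 2 by ring] at h
  simpa only [mul_comm] using h.symm

theorem integral_rpow_mul_rpow_sub {a b z : ℝ} (ha : 0 < a) (hb : 0 < b) (hz : 0 < z) :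
    ∫ s in (0 : ℝ)..z, s ^ (a - 1) * (z - s) ^ (b - 1)
      = Gamma a * Gamma b / Gamma (a + b) * z ^ (a + b - 1) := by
  have h := Complex.betaIntegral_scaled a b hz
  rw [Complex.betaIntegral_eq_Gamma_mul_div _ _ (by simpa) (by simpa)] at h
  apply Complex.ofReal_injective
  rw [← intervalIntegral.integral_ofReal, Complex.ofReal_mul, Complex.ofReal_div, Complex.ofReal_mul, ← Complex.Gamma_ofReal,
    ← Complex.Gamma_ofReal, ← Complex.Gamma_ofReal, Complex.ofReal_cpow hz.le, mul_comm]
  push_cast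
  rw [← h]
  refine intervalIntegral.integral_congr fun s hs => ?_
  rw [uIcc_of_le hz.le] at hs
  simp only [Complex.ofReal_cpow hs.1, Complex.ofReal_cpow (sub_nonneg.2 hs.2)]
  push_cast
  rfl

theorem mul_rpow_pow {s : ℝ} (hs : 0 ≤ s) (lam α : ℝ) (k : ℕ) :
    (lam * s ^ α) ^ k = lam ^ k * s ^ (α * k) := by
  rw [mul_pow, ← rpow_natCast (s ^ α), ← rpow_mul hs]

section MittagLefflerTerm

variable {α β ν z : ℝ}

theorem integral_mittagLefflerTerm (hα : 0 ≤ α) (hβ : 0 < β) (hν : 0 < ν) (hz : 0 < z)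
    (lam : ℝ) (k : ℕ) :
    ∫ s in (0 : ℝ)..z, lam ^ k / Gamma (α * k + β) * (s ^ (α * k + β - 1) * (z - s) ^ (ν - 1))
      = Gamma ν * z ^ (β + ν - 1) * ((lam * z ^ α) ^ k / Gamma (α * k + (β + ν))) := by
  have hk : 0 < α * k + β := by positivity
  rw [intervalIntegral.integral_const_mul, integral_rpow_mul_rpow_sub hk hν hz,
    mul_rpow_pow hz.le, add_assoc, show α * k + (β + ν) - 1 = α * k + (β + ν - 1) by ring,
    rpow_add hz]
  field_simp [(Gamma_pos_of_pos hk).ne']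

theorem mittagLeffler_integrand_eq_tsum {s : ℝ} (hs : 0 < s) (lam : ℝ) :
    (z - s) ^ (ν - 1) * s ^ (β - 1) * mlE α β (lam * s ^ α)
      = ∑' k : ℕ, lam ^ k / Gamma (α * k + β) * (s ^ (α * k + β - 1) * (z - s) ^ (ν - 1)) := by
  rw [mlE, ← tsum_mul_left]
  refine tsum_congr fun k => ?_
  rw [mul_rpow_pow hs.le, add_sub_assoc, rpow_add hs]
  ring

end MittagLefflerTerm

/-- Fractional integration formula for the Mittag-Leffler function:
`(1/Γ(ν)) ∫₀^z (z−s)^{ν−1} s^{β−1} E_{α,β}(λ s^α) ds = z^{β+ν−1} E_{α,β+ν}(λ z^α)`. -/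
theorem mittagLeffler_fracInt (ν β α lam z : ℝ) (hν : 0 < ν) (hβ : 0 < β) (hα : 0 < α)
    (hz : 0 < z) :
    (1 / Real.Gamma ν) *
        ∫ s in (0:ℝ)..z, (z - s) ^ (ν - 1) * s ^ (β - 1) * mlE α β (lam * s ^ α)
      = z ^ (β + ν - 1) * mlE α (β + ν) (lam * z ^ α) := by
  set F : ℝ → ℕ → ℝ → ℝ :=
    fun l k s => l ^ k / Gamma (α * k + β) * (s ^ (α * k + β - 1) * (z - s) ^ (ν - 1))
  have hF_int (k : ℕ) : IntegrableOn (F lam k) (Ioc 0 z) :=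
    ((intervalIntegrable_rpow_mul_rpow_sub (by positivity) hν hz).const_mul _).1
  have hF_norm (k : ℕ) : ∫ s in Ioc 0 z, ‖F lam k s‖ = ∫ s in (0 : ℝ)..z, F |lam| k s := by
    rw [intervalIntegral.integral_of_le hz.le]
    refine setIntegral_congr_fun measurableSet_Ioc fun s hs => ?_
    simp only [F, norm_mul, norm_div, norm_pow, Real.norm_eq_abs,
      abs_of_nonneg (rpow_nonneg hs.1.le _), abs_of_nonneg (rpow_nonneg (sub_nonneg.2 hs.2) _),
      abs_of_pos (Gamma_pos_of_pos (by positivity : 0 < α * k + β))]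
  have hsum := hasSum_integral_of_summable_integral_norm hF_int <| by
    simp_rw [hF_norm, F, integral_mittagLefflerTerm hα.le hβ hν hz]
    exact (summable_pow_div_Gamma hα _ _).mul_left _
  have hintegral : ∫ s in (0 : ℝ)..z, (z - s) ^ (ν - 1) * s ^ (β - 1) * mlE α β (lam * s ^ α)
      = Gamma ν * (z ^ (β + ν - 1) * mlE α (β + ν) (lam * z ^ α)) := by
    rw [intervalIntegral.integral_of_le hz.le,
      setIntegral_congr_fun measurableSet_Ioc fun s hs => mittagLeffler_integrand_eq_tsum hs.1 lam,
      ← hsum.tsum_eq, mlE, ← tsum_mul_left, ← tsum_mul_left]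
    refine tsum_congr fun k => ?_
    rw [← intervalIntegral.integral_of_le hz.le, integral_mittagLefflerTerm hα.le hβ hν hz, mul_assoc]
  rw [hintegral, ← mul_assoc, one_div_mul_cancel (Gamma_pos_of_pos hν).ne', one_mul]
end

section
/- For α > 0 and t > 0, the derivative of t ↦ E_{α,1}(m t^α) equals m t^{α−1} E_{α,α}(m t^α). -/
/-! Γ grows faster than every exponential, so the series `∑ x ^ k / Γ(α k + β)` and its termwise
derivative converge absolutely on all of `ℝ`, and `E_{α,1}` may be differentiated term by term.
Since `Γ(α (k + 1) + 1) = α (k + 1) Γ(α k + α)`, the differentiated coefficients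
`(k + 1) / Γ(α (k + 1) + 1)` are `1 / (α Γ(α k + α))`, i.e. `E_{α,1}' = E_{α,α} / α`.
The chain rule with `d/dt (m t ^ α) = m α t ^ (α - 1)` then gives the claim. -/

open Real Filter

theorem Real.eventually_rpow_le_Gamma {M : ℝ} (hM : 1 ≤ M) :
    ∀ᶠ x : ℝ in atTop, M ^ x ≤ Gamma x := by
  have hfac : ∀ᶠ n : ℕ in atTop, M * M ^ n < ((n - 1).factorial : ℝ) :=
    FloorSemiring.eventually_mul_pow_lt_factorial_sub M M 1
  filter_upwards [tendsto_nat_floor_atTop.eventually hfac, eventually_ge_atTop 2] with x hx hx2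
  set n := ⌊x⌋₊
  have hnx : (n : ℝ) ≤ x := Nat.floor_le (by linarith)
  have hn2 : (2 : ℝ) ≤ n := by
    exact_mod_cast Nat.le_floor (by exact_mod_cast hx2 : ((2 : ℕ) : ℝ) ≤ x)
  have hn1 : 1 ≤ n := by exact_mod_cast (by linarith : (1 : ℝ) ≤ n)
  calc M ^ x ≤ M ^ ((n : ℝ) + 1) := rpow_le_rpow_of_exponent_le hM (Nat.lt_floor_add_one x).le
    _ = M * M ^ n := by rw [rpow_add_one (by positivity), rpow_natCast, mul_comm]
    _ ≤ ((n - 1).factorial : ℝ) := hx.le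
    _ = Gamma n := by rw [← Gamma_nat_eq_factorial, Nat.cast_sub hn1]; simp
    _ ≤ Gamma x := Gamma_strictMonoOn_Ici.monotoneOn hn2 (hn2.trans hnx) hnx

theorem summable_pow_div_Gamma_mul_add {α : ℝ} (hα : 0 < α) (β x : ℝ) :
    Summable fun k : ℕ => x ^ k / Gamma (α * k + β) := by
  -- `M ^ α = |x| + 1` makes the comparison series geometric with ratio `|x| / (|x| + 1)`.
  set M := (|x| + 1) ^ α⁻¹
  have hM : 1 ≤ M := one_le_rpow (by linarith [abs_nonneg x]) (by positivity)
  have hMα : M ^ α = |x| + 1 := by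
    rw [← rpow_mul (by positivity), inv_mul_cancel₀ hα.ne', rpow_one]
  have hlin : Tendsto (fun k : ℕ => α * k + β) atTop atTop :=
    tendsto_atTop_add_const_right _ _ (tendsto_natCast_atTop_atTop.const_mul_atTop hα)
  have hgeom : Summable fun k : ℕ => M ^ (-β) * (|x| / (|x| + 1)) ^ k :=
    (summable_geometric_of_lt_one (by positivity)
      ((div_lt_one (by positivity)).2 (lt_add_one _))).mul_left _
  refine hgeom.of_norm_bounded_eventually_nat ?_
  filter_upwards [hlin.eventually (eventually_rpow_le_Gamma hM)] with k hk
  have hMpos : 0 < M ^ (α * k + β) := by positivity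
  calc ‖x ^ k / Gamma (α * k + β)‖ = |x| ^ k / Gamma (α * k + β) := by
        rw [norm_div, norm_pow, Real.norm_eq_abs, Real.norm_of_nonneg (hMpos.le.trans hk)]
    _ ≤ |x| ^ k / M ^ (α * k + β) := div_le_div_of_nonneg_left (by positivity) hMpos hk
    _ = M ^ (-β) * (|x| / (|x| + 1)) ^ k := by
        rw [rpow_add (by positivity), rpow_mul (by positivity), hMα, rpow_natCast,
          rpow_neg (by positivity), div_pow]
        ring

theorem hasDerivAt_tsum_mul_pow {𝕜 : Type*} [RCLike 𝕜] {c : ℕ → 𝕜}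
    (hc : ∀ y : 𝕜, Summable fun k => ‖c k * (k * y ^ (k - 1))‖) (x : 𝕜) :
    HasDerivAt (fun y => ∑' k, c k * y ^ k) (∑' k, c k * (k * x ^ (k - 1))) x := by
  set R := ‖x‖ + 1
  refine hasDerivAt_tsum_of_isPreconnected (hc R) Metric.isOpen_ball
    (convex_ball 0 R).isPreconnected (fun k y _ => (hasDerivAt_pow k y).const_mul (c k)) ?_
    (Metric.mem_ball_self (by positivity)) (summable_of_ne_finset_zero (s := {0}) ?_) (by simp [R])
  · intro k y hy
    rw [mem_ball_zero_iff] at hy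
    simp only [norm_mul, norm_pow, RCLike.norm_natCast, RCLike.norm_ofReal,
      abs_of_pos (by positivity : 0 < R)]
    gcongr
  · intro k hk
    simp_all

theorem inv_Gamma_mul_succ_add_one_mul {α : ℝ} (hα : 0 < α) (k : ℕ) :
    (Gamma (α * (k + 1 : ℕ) + 1))⁻¹ * (k + 1 : ℕ) = (Gamma (α * k + α))⁻¹ / α := by
  have hpos : 0 < α * k + α := by positivity
  rw [show α * (k + 1 : ℕ) + 1 = α * k + α + 1 by push_cast; ring, Gamma_add_one hpos.ne']
  push_cast
  field_simp

theorem hasDerivAt_mlE_one {α : ℝ} (hα : 0 < α) (x : ℝ) :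
    HasDerivAt (mlE α 1) (mlE α α x / α) x := by
  have hshift : ∀ (y : ℝ) (k : ℕ),
      (Gamma (α * (k + 1 : ℕ) + 1))⁻¹ * ((k + 1 : ℕ) * y ^ (k + 1 - 1))
        = y ^ k / Gamma (α * k + α) / α := by
    intro y k
    rw [← mul_assoc, inv_Gamma_mul_succ_add_one_mul hα, Nat.add_sub_cancel]
    ring
  have hsum : ∀ y : ℝ, Summable fun k : ℕ => (Gamma (α * k + 1))⁻¹ * (k * y ^ (k - 1)) := by
    intro y
    rw [← summable_nat_add_iff 1]
    simp_rw [hshift]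
    exact (summable_pow_div_Gamma_mul_add hα α y).div_const α
  have hfun : mlE α 1 = fun y => ∑' k : ℕ, (Gamma (α * k + 1))⁻¹ * y ^ k := by
    funext y
    simp_rw [mlE, div_eq_inv_mul]
  have hval : mlE α α x / α = ∑' k : ℕ, (Gamma (α * k + 1))⁻¹ * (k * x ^ (k - 1)) := by
    rw [(hsum x).tsum_eq_zero_add]
    simp_rw [hshift]
    simp [mlE, tsum_div_const]
  rw [hfun, hval]
  exact hasDerivAt_tsum_mul_pow (fun y => (hsum y).norm) x

/-- `d/dt E_{α,1}(m t^α) = m t^{α−1} E_{α,α}(m t^α)` for `α > 0`, `t > 0`. -/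
theorem deriv_mittagLeffler_one (α m t : ℝ) (hα : 0 < α) (ht : 0 < t) :
    HasDerivAt (fun τ : ℝ => mlE α 1 (m * τ ^ α))
      (m * t ^ (α - 1) * mlE α α (m * t ^ α)) t := by
  have hinner : HasDerivAt (fun τ : ℝ => m * τ ^ α) (m * (α * t ^ (α - 1))) t :=
    (hasDerivAt_rpow_const (Or.inl ht.ne')).const_mul m
  refine ((hasDerivAt_mlE_one hα (m * t ^ α)).comp t hinner).congr_deriv ?_
  field_simp
end

section
/- Let 1 < α ≤ 2, m ∈ ℝ, 0 ≤ β ≤ 2−α, 0 < γ ≤ α−1, and a > 0 satisfying the nondegeneracy condition E_{α,α+β}(m a^α) E_{α,α−1−γ}(m a^α) ≠ E_{α,α+β−1}(m a^α) E_{α,α−γ}(m a^α). Define Ê₁(m t) = t^{α−2}[t E_{α,α−1−γ}(m a^α) E_{α,α}(m t^α) − a E_{α,α−γ}(m a^α) E_{α,α−1}(m t^α)] / (a^{α+β−1} Δ), where Δ = E_{α,α+β}(m a^α) E_{α,α−1−γ}(m a^α) − E_{α,α+β−1}(m a^α) E_{α,α−γ}(m a^α). Then (I^β Ê₁)(a)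 = 1 and (D^γ Ê₁)(a) = 0. -/
/-- Riemann-Liouville fractional integral of order `β ≥ 0` (identity for `β = 0`). -/
noncomputable def rlI (β : ℝ) (u : ℝ → ℝ) (t : ℝ) : ℝ :=
  if β = 0 then u t
  else (1 / Real.Gamma β) * ∫ s in (0:ℝ)..t, (t - s) ^ (β - 1) * u s

/-- Riemann-Liouville fractional derivative of order `γ ∈ (0,1]`
(ordinary derivative for `γ = 1`). -/
noncomputable def rlD (γ : ℝ) (u : ℝ → ℝ) (t : ℝ) : ℝ :=
  if γ = 1 then deriv u t
  else deriv (fun τ : ℝ =>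
    (1 / Real.Gamma (1 - γ)) * ∫ s in (0:ℝ)..τ, (τ - s) ^ (-γ) * u s) t

open Real MeasureTheory Set

noncomputable def mlTerm (α m c : ℝ) (k : ℕ) (t : ℝ) : ℝ :=
  m ^ k * t ^ (α * k + c - 1) / Gamma (α * k + c)

noncomputable def mlKernel (α m c t : ℝ) : ℝ :=
  ∑' k, mlTerm α m c k t

theorem integrable_tsum_of_summable_integral_norm {α E : Type*} [MeasurableSpace α]
    {μ : Measure α} [NormedAddCommGroup E] [CompleteSpace E] {F : ℕ → α → E}
    (hF_int : ∀ i, Integrable (F i) μ) (hF_sum : Summable fun i ↦ ∫ a, ‖F i a‖ ∂μ) :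
    Integrable (fun a ↦ ∑' i, F i a) μ := by
  have h_lintegral : ∫⁻ a, ∑' i, ‖F i a‖ₑ ∂μ < ⊤ := by
    rw [lintegral_tsum fun i ↦ (hF_int i).1.enorm]
    simp_rw [← ofReal_integral_norm_eq_lintegral_enorm (hF_int _)]
    rw [← ENNReal.ofReal_tsum_of_nonneg (fun i ↦ integral_nonneg fun a ↦ norm_nonneg _) hF_sum]
    exact ENNReal.ofReal_lt_top
  have h_summable : ∀ᵐ a ∂μ, Summable fun i ↦ F i a := by
    filter_upwards [ae_lt_top' (AEMeasurable.tsum fun i ↦ (hF_int i).1.enorm)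
      h_lintegral.ne] with a ha
    have h : Summable fun i ↦ ‖F i a‖₊ := ENNReal.tsum_coe_ne_top_iff_summable.1 ha.ne
    exact Summable.of_norm (NNReal.summable_coe.2 h)
  refine ⟨aestronglyMeasurable_of_tendsto_ae Filter.atTop
    (fun n ↦ Finset.aestronglyMeasurable_fun_sum _ fun i _ ↦ (hF_int i).1)
    (h_summable.mono fun a ha ↦ ha.hasSum.tendsto_sum_nat), ?_⟩
  exact (lintegral_mono fun a ↦ enorm_tsum_le_tsum_enorm).trans_lt h_lintegral

theorem integral_sub_rpow_mul_rpow {p q t : ℝ} (hp : -1 < p) (hq : 0 < q) (ht : 0 < t) :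
    ∫ s in (0:ℝ)..t, (t - s) ^ (q - 1) * s ^ p
      = Gamma (p + 1) * Gamma q / Gamma (p + 1 + q) * t ^ (p + q) := by
  have hB := Complex.betaIntegral_scaled (p + 1 : ℝ) q ht
  rw [Complex.betaIntegral_eq_Gamma_mul_div _ _ (by simp; linarith) (by simpa using hq)] at hB
  apply Complex.ofReal_injective
  rw [← intervalIntegral.integral_ofReal]
  push_cast
  rw [Complex.ofReal_cpow ht.le, ← Complex.Gamma_ofReal, ← Complex.Gamma_ofReal,
    ← Complex.Gamma_ofReal]
  push_cast
  convert hB using 1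
  · refine intervalIntegral.integral_congr fun s hs ↦ ?_
    rw [uIcc_of_le ht.le] at hs
    rw [Complex.ofReal_cpow (sub_nonneg.2 hs.2), Complex.ofReal_cpow hs.1]
    push_cast
    ring_nf
  · push_cast
    ring_nf

theorem intervalIntegrable_sub_rpow_mul_rpow {p q t : ℝ} (hp : -1 < p) (hq : 0 < q)
    (ht : 0 < t) : IntervalIntegrable (fun s ↦ (t - s) ^ (q - 1) * s ^ p) volume 0 t := by
  refine intervalIntegral.intervalIntegrable_of_integral_ne_zero ?_
  rw [integral_sub_rpow_mul_rpow hp hq ht]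
  have := Gamma_pos_of_pos (by linarith : 0 < p + 1)
  have := Gamma_pos_of_pos hq
  have := Gamma_pos_of_pos (by linarith : 0 < p + 1 + q)
  positivity

theorem rpow_le_rpow_add_rpow_of_mem_Icc {a b y : ℝ} (p : ℝ) (ha : 0 < a) (hy : y ∈ Icc a b) :
    y ^ p ≤ a ^ p + b ^ p := by
  have hy0 : 0 < y := ha.trans_le hy.1
  rcases le_total 0 p with hp | hp
  · linarith [rpow_le_rpow hy0.le hy.2 hp, rpow_nonneg ha.le p]
  · linarith [rpow_le_rpow_of_nonpos ha hy.1 hp, rpow_nonneg (ha.trans_le (hy.1.trans hy.2)).le p]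

section MittagLeffler

variable {α m c t : ℝ}

theorem summable_norm_mlE_terms (hα : 1 ≤ α) (c x : ℝ) :
    Summable fun k : ℕ ↦ ‖x ^ k / Gamma (α * k + c)‖ := by
  obtain ⟨k₀, hk₀⟩ := exists_nat_ge (2 - c)
  rw [← summable_nat_add_iff k₀]
  refine ((Real.summable_pow_div_factorial |x|).mul_left (|x| ^ k₀)).of_nonneg_of_le
    (fun _ ↦ norm_nonneg _) fun k ↦ ?_
  have h_arg : (k : ℝ) + 2 ≤ α * ↑(k + k₀) + c := by
    push_cast
    nlinarith [Nat.cast_nonneg (α := ℝ) k, Nat.cast_nonneg (α := ℝ) k₀]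
  have h_fact : (k.factorial : ℝ) ≤ Gamma (α * ↑(k + k₀) + c) :=
    calc (k.factorial : ℝ) ≤ (k + 1).factorial := by exact_mod_cast Nat.factorial_le k.le_succ
      _ = Gamma ((k : ℝ) + 2) := by rw [← Gamma_nat_eq_factorial]; push_cast; ring_nf
      _ ≤ Gamma (α * ↑(k + k₀) + c) :=
        Gamma_strictMonoOn_Ici.monotoneOn (by simp)
          (by simp at h_arg ⊢; linarith) h_arg
  have h_pos : (0 : ℝ) < k.factorial := by exact_mod_cast k.factorial_pos
  rw [norm_div, norm_pow, Real.norm_eq_abs, Real.norm_eq_abs, abs_of_pos (h_pos.trans_le h_fact),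
    pow_add, mul_comm (|x| ^ k), mul_div_assoc]
  gcongr

theorem mlTerm_eq (ht : 0 < t) (k : ℕ) :
    mlTerm α m c k t = t ^ (c - 1) * ((m * t ^ α) ^ k / Gamma (α * k + c)) := by
  rw [mlTerm, show α * k + c - 1 = α * k + (c - 1) by ring, rpow_add ht, mul_pow,
    rpow_mul ht.le, rpow_natCast]
  ring

theorem mlKernel_eq (ht : 0 < t) : mlKernel α m c t = t ^ (c - 1) * mlE α c (m * t ^ α) := by
  rw [mlKernel, mlE, ← tsum_mul_left]
  exact tsum_congr (mlTerm_eq ht)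

theorem norm_mlTerm_le (hα : 0 ≤ α) {R : ℝ} (ht : 0 < t) (htR : t ≤ R) (k : ℕ) :
    ‖mlTerm α m c k t‖ ≤ t ^ (c - 1) * ‖(|m| * R ^ α) ^ k / Gamma (α * k + c)‖ := by
  have hR : 0 < R := ht.trans_le htR
  simp only [mlTerm_eq ht, norm_mul, norm_div, norm_pow, Real.norm_eq_abs, abs_abs,
    abs_of_pos (rpow_pos_of_pos ht _), abs_of_pos (rpow_pos_of_pos hR _)]
  gcongr

theorem summable_mlTerm (hα : 1 ≤ α) (ht : 0 < t) : Summable fun k ↦ mlTerm α m c k t :=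
  .of_norm_bounded ((summable_norm_mlE_terms hα c _).mul_left _)
    (norm_mlTerm_le (by linarith) ht le_rfl)

theorem hasDerivAt_mlTerm (ht : 0 < t) (k : ℕ) :
    HasDerivAt (mlTerm α m c k) (mlTerm α m (c - 1) k t) t := by
  have h : HasDerivAt (fun x ↦ m ^ k * x ^ (α * k + c - 1) / Gamma (α * k + c))
      (m ^ k * ((α * k + c - 1) * t ^ (α * k + c - 1 - 1)) / Gamma (α * k + c)) t :=
    ((hasDerivAt_rpow_const (Or.inl ht.ne')).const_mul _).div_const _
  refine h.congr_deriv ?_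
  rw [mlTerm, show α * k + (c - 1) - 1 = α * k + c - 1 - 1 by ring,
    show α * k + (c - 1) = α * k + c - 1 by ring]
  rcases eq_or_ne (α * k + c - 1) 0 with h0 | h0
  · -- both sides vanish: the right one because Mathlib's `Gamma` is `0` at `0`
    simp [h0]
  · rw [show α * k + c = α * k + c - 1 + 1 by ring, Gamma_add_one h0]
    field_simp
    simp

theorem hasDerivAt_mlKernel (hα : 1 ≤ α) (ht : 0 < t) :
    HasDerivAt (mlKernel α m c) (mlKernel α m (c - 1) t) t := by
  set C := (t / 2) ^ (c - 1 - 1) + (2 * t) ^ (c - 1 - 1)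
  have h_bound : ∀ k y, y ∈ Ioo (t / 2) (2 * t) →
      ‖mlTerm α m (c - 1) k y‖ ≤ C * ‖(|m| * (2 * t) ^ α) ^ k / Gamma (α * k + (c - 1))‖ := by
    intro k y hy
    have hy0 : 0 < y := by linarith [hy.1]
    refine (norm_mlTerm_le (by linarith) hy0 hy.2.le k).trans ?_
    gcongr
    exact rpow_le_rpow_add_rpow_of_mem_Icc _ (by linarith) (Ioo_subset_Icc_self hy)
  have ht_mem : t ∈ Ioo (t / 2) (2 * t) := ⟨by linarith, by linarith⟩
  exact hasDerivAt_tsum_of_isPreconnected ((summable_norm_mlE_terms hα _ _).mul_left C)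
    isOpen_Ioo (convex_Ioo _ _).isPreconnected
    (fun k y hy ↦ hasDerivAt_mlTerm (by linarith [hy.1]) k) h_bound ht_mem
    (summable_mlTerm hα ht) ht_mem

theorem sub_rpow_mul_mlTerm_eq (q s : ℝ) (k : ℕ) :
    (t - s) ^ (q - 1) * mlTerm α m c k s
      = m ^ k / Gamma (α * k + c) * ((t - s) ^ (q - 1) * s ^ (α * k + c - 1)) := by
  rw [mlTerm]; ring

theorem integral_sub_rpow_mul_mlTerm (hα : 0 ≤ α) (hc : 0 < c) {q : ℝ} (hq : 0 < q) (ht : 0 < t)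
    (k : ℕ) :
    ∫ s in (0:ℝ)..t, (t - s) ^ (q - 1) * mlTerm α m c k s = Gamma q * mlTerm α m (c + q) k t := by
  have hp : -1 < α * k + c - 1 := by nlinarith [Nat.cast_nonneg (α := ℝ) k]
  simp_rw [sub_rpow_mul_mlTerm_eq]
  rw [intervalIntegral.integral_const_mul, integral_sub_rpow_mul_rpow hp hq ht, mlTerm,
    show α * k + c - 1 + 1 = α * k + c by ring,
    show α * k + c + q = α * k + (c + q) by ring,
    show α * k + c - 1 + q = α * k + (c + q) - 1 by ring]
  have hΓ := (Gamma_pos_of_pos (by linarith : 0 < α * k + c)).ne'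
  field_simp

theorem intervalIntegrable_sub_rpow_mul_mlTerm (hα : 0 ≤ α) (hc : 0 < c) {q : ℝ} (hq : 0 < q)
    (ht : 0 < t) (k : ℕ) :
    IntervalIntegrable (fun s ↦ (t - s) ^ (q - 1) * mlTerm α m c k s) volume 0 t := by
  have hp : -1 < α * k + c - 1 := by nlinarith [Nat.cast_nonneg (α := ℝ) k]
  simp_rw [sub_rpow_mul_mlTerm_eq]
  exact (intervalIntegrable_sub_rpow_mul_rpow hp hq ht).const_mul _

theorem norm_mlTerm (hα : 0 ≤ α) (hc : 0 < c) (ht : 0 < t) (k : ℕ) :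
    ‖mlTerm α m c k t‖ = mlTerm α |m| c k t := by
  have hΓ := Gamma_pos_of_pos (by nlinarith [Nat.cast_nonneg (α := ℝ) k] : 0 < α * k + c)
  rw [mlTerm, mlTerm, norm_div, norm_mul, norm_pow, Real.norm_of_nonneg (rpow_nonneg ht.le _),
    Real.norm_of_nonneg hΓ.le, Real.norm_eq_abs]

theorem summable_integral_norm_sub_rpow_mul_mlTerm (hα : 1 ≤ α) (hc : 0 < c) {q : ℝ}
    (hq : 0 < q) (ht : 0 < t) :
    Summable fun k ↦ ∫ s in Ioc 0 t, ‖(t - s) ^ (q - 1) * mlTerm α m c k s‖ := by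
  have h_eq (k : ℕ) : ∫ s in Ioc 0 t, ‖(t - s) ^ (q - 1) * mlTerm α m c k s‖
      = Gamma q * mlTerm α |m| (c + q) k t := by
    rw [← integral_sub_rpow_mul_mlTerm (by linarith) hc hq ht,
      intervalIntegral.integral_of_le ht.le]
    refine setIntegral_congr_fun measurableSet_Ioc fun s hs ↦ ?_
    rw [norm_mul, Real.norm_of_nonneg (rpow_nonneg (sub_nonneg.2 hs.2) _),
      norm_mlTerm (by linarith) hc hs.1]
  simp_rw [h_eq]
  exact (summable_mlTerm hα ht).mul_left _

theorem integrableOn_sub_rpow_mul_mlTerm (hα : 0 ≤ α) (hc : 0 < c) {q : ℝ} (hq : 0 < q)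
    (ht : 0 < t) (k : ℕ) :
    IntegrableOn (fun s ↦ (t - s) ^ (q - 1) * mlTerm α m c k s) (Ioc 0 t) :=
  (intervalIntegrable_iff_integrableOn_Ioc_of_le ht.le).1
    (intervalIntegrable_sub_rpow_mul_mlTerm hα hc hq ht k)

theorem intervalIntegrable_sub_rpow_mul_mlKernel (hα : 1 ≤ α) (hc : 0 < c) {q : ℝ}
    (hq : 0 < q) (ht : 0 < t) :
    IntervalIntegrable (fun s ↦ (t - s) ^ (q - 1) * mlKernel α m c s) volume 0 t := by
  simp_rw [mlKernel, ← tsum_mul_left]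
  exact (intervalIntegrable_iff_integrableOn_Ioc_of_le ht.le).2
    (integrable_tsum_of_summable_integral_norm
      (integrableOn_sub_rpow_mul_mlTerm (by linarith) hc hq ht)
      (summable_integral_norm_sub_rpow_mul_mlTerm hα hc hq ht))

theorem integral_sub_rpow_mul_mlKernel (hα : 1 ≤ α) (hc : 0 < c) {q : ℝ} (hq : 0 < q)
    (ht : 0 < t) :
    ∫ s in (0:ℝ)..t, (t - s) ^ (q - 1) * mlKernel α m c s = Gamma q * mlKernel α m (c + q) t := by
  simp_rw [mlKernel, ← tsum_mul_left, intervalIntegral.integral_of_le ht.le]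
  rw [← integral_tsum_of_summable_integral_norm
      (integrableOn_sub_rpow_mul_mlTerm (by linarith) hc hq ht)
      (summable_integral_norm_sub_rpow_mul_mlTerm hα hc hq ht)]
  refine tsum_congr fun k ↦ ?_
  rw [← intervalIntegral.integral_of_le ht.le, integral_sub_rpow_mul_mlTerm (by linarith) hc hq ht]

theorem rlI_congr_of_eqOn {β : ℝ} {u v : ℝ → ℝ} (huv : EqOn u v (Ioi 0)) (ht : 0 < t) :
    rlI β u t = rlI β v t := by
  unfold rlI
  split_ifs
  · exact huv ht
  · rw [intervalIntegral.integral_of_le ht.le, intervalIntegral.integral_of_le ht.le,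
      setIntegral_congr_fun measurableSet_Ioc fun s hs ↦ by rw [huv hs.1]]

theorem rlD_eq_deriv_rlI (γ : ℝ) (u : ℝ → ℝ) : rlD γ u = deriv (rlI (1 - γ) u) := by
  funext t
  unfold rlD
  split_ifs with hγ
  · congr 1; funext τ; simp [rlI, hγ]
  · congr 1; funext τ; rw [rlI, if_neg (sub_ne_zero.2 (Ne.symm hγ)), sub_sub_cancel_left]

theorem rlI_mlKernel_combination (hα : 1 ≤ α) {c₁ c₂ d₁ d₂ β : ℝ} (hd₁ : 0 < d₁) (hd₂ : 0 < d₂)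
    (hβ : 0 ≤ β) (ht : 0 < t) :
    rlI β (fun s ↦ c₁ * mlKernel α m d₁ s + c₂ * mlKernel α m d₂ s) t
      = c₁ * mlKernel α m (d₁ + β) t + c₂ * mlKernel α m (d₂ + β) t := by
  rcases hβ.eq_or_lt with rfl | hβ
  · simp [rlI]
  have hΓ := (Gamma_pos_of_pos hβ).ne'
  simp_rw [rlI, if_neg hβ.ne', mul_add, mul_left_comm _ c₁, mul_left_comm _ c₂]
  rw [intervalIntegral.integral_add
      ((intervalIntegrable_sub_rpow_mul_mlKernel hα hd₁ hβ ht).const_mul c₁)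
      ((intervalIntegrable_sub_rpow_mul_mlKernel hα hd₂ hβ ht).const_mul c₂),
    intervalIntegral.integral_const_mul, intervalIntegral.integral_const_mul,
    integral_sub_rpow_mul_mlKernel hα hd₁ hβ ht, integral_sub_rpow_mul_mlKernel hα hd₂ hβ ht]
  field_simp

theorem rpow_mul_mlE_sub_eq_mlKernel (A B K a : ℝ) (ht : 0 < t) :
    t ^ (α - 2) * (t * A * mlE α α (m * t ^ α) - a * B * mlE α (α - 1) (m * t ^ α)) / K
      = A / K * mlKernel α m α t + -(a * B) / K * mlKernel α m (α - 1) t := by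
  have h : t ^ (α - 1) = t ^ (α - 2) * t := by rw [← rpow_add_one ht.ne']; ring_nf
  rw [mlKernel_eq ht, mlKernel_eq ht, h, show α - 1 - 1 = α - 2 by ring]
  ring

end MittagLeffler

theorem E1_inner_conditions_general (α β γ m a : ℝ)
    (hα1 : 1 < α) (hα2 : α ≤ 2) (hβ0 : 0 ≤ β)
    (hγ : γ ≤ α - 1) (ha : 0 < a)
    (hdet : mlE α (α + β) (m * a ^ α) * mlE α (α - 1 - γ) (m * a ^ α)
      ≠ mlE α (α + β - 1) (m * a ^ α) * mlE α (α - γ) (m * a ^ α)) :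
    let Δ : ℝ := mlE α (α + β) (m * a ^ α) * mlE α (α - 1 - γ) (m * a ^ α)
      - mlE α (α + β - 1) (m * a ^ α) * mlE α (α - γ) (m * a ^ α)
    let E₁ : ℝ → ℝ := fun t =>
      t ^ (α - 2) * (t * mlE α (α - 1 - γ) (m * a ^ α) * mlE α α (m * t ^ α)
        - a * mlE α (α - γ) (m * a ^ α) * mlE α (α - 1) (m * t ^ α))
      / (a ^ (α + β - 1) * Δ)
    rlI β E₁ a = 1 ∧ rlD γ E₁ a = 0 := by
  intro Δ E₁
  set c₁ := mlE α (α - 1 - γ) (m * a ^ α) / (a ^ (α + β - 1) * Δ) with hc₁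
  set c₂ := -(a * mlE α (α - γ) (m * a ^ α)) / (a ^ (α + β - 1) * Δ) with hc₂
  have hα : 0 < α - 1 := by linarith
  have hE₁ : EqOn E₁ (fun s ↦ c₁ * mlKernel α m α s + c₂ * mlKernel α m (α - 1) s) (Ioi 0) :=
    fun s hs ↦ rpow_mul_mlE_sub_eq_mlKernel _ _ _ _ hs
  constructor
  · rw [rlI_congr_of_eqOn hE₁ ha, rlI_mlKernel_combination hα1.le (by linarith) hα hβ0 ha,
      mlKernel_eq ha, mlKernel_eq ha, show α - 1 + β = α + β - 1 by ring,
      rpow_sub_one ha.ne' (α + β - 1), hc₁, hc₂]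
    have hΔ : Δ ≠ 0 := sub_ne_zero.2 hdet
    have : a ^ (α + β - 1) ≠ 0 := (rpow_pos_of_pos ha _).ne'
    field_simp
    ring
  · have h_rlI : rlI (1 - γ) E₁ =ᶠ[nhds a]
        fun τ ↦ c₁ * mlKernel α m (α + (1 - γ)) τ + c₂ * mlKernel α m (α - 1 + (1 - γ)) τ := by
      filter_upwards [Ioi_mem_nhds ha] with τ hτ
      rw [rlI_congr_of_eqOn hE₁ hτ,
        rlI_mlKernel_combination hα1.le (by linarith) hα (by linarith) hτ]
    rw [rlD_eq_deriv_rlI, h_rlI.deriv_eq, (((hasDerivAt_mlKernel hα1.le ha).const_mul c₁).fun_add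
      ((hasDerivAt_mlKernel hα1.le ha).const_mul c₂)).deriv, mlKernel_eq ha, mlKernel_eq ha,
      show α + (1 - γ) - 1 = α - γ by ring, show α - 1 + (1 - γ) - 1 = α - 1 - γ by ring,
      show α - γ - 1 = α - 1 - γ - 1 + 1 by ring, rpow_add_one ha.ne', hc₁, hc₂]
    ring

/-- The function `Ê₁` satisfies `(I^β Ê₁)(a) = 1` and `(D^γ Ê₁)(a) = 0`. -/
theorem E1_inner_conditions (α β γ m a : ℝ)
    (hα1 : 1 < α) (hα2 : α ≤ 2) (hβ0 : 0 ≤ β) (hβ : β ≤ 2 - α)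
    (hγ0 : 0 < γ) (hγ : γ ≤ α - 1) (ha : 0 < a)
    (hdet : mlE α (α + β) (m * a ^ α) * mlE α (α - 1 - γ) (m * a ^ α)
      ≠ mlE α (α + β - 1) (m * a ^ α) * mlE α (α - γ) (m * a ^ α)) :
    let Δ : ℝ := mlE α (α + β) (m * a ^ α) * mlE α (α - 1 - γ) (m * a ^ α)
      - mlE α (α + β - 1) (m * a ^ α) * mlE α (α - γ) (m * a ^ α)
    let E₁ : ℝ → ℝ := fun t =>
      t ^ (α - 2) * (t * mlE α (α - 1 - γ) (m * a ^ α) * mlE α α (m * t ^ α)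
        - a * mlE α (α - γ) (m * a ^ α) * mlE α (α - 1) (m * t ^ α))
      / (a ^ (α + β - 1) * Δ)
    rlI β E₁ a = 1 ∧ rlD γ E₁ a = 0 :=
  E1_inner_conditions_general α β γ m a hα1 hα2 hβ0 hγ ha hdet
end
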